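/- For every δ > 0 there exist a constant c > 0 and an integer K such that for every integer k ≥ K one has Σ_{j=1}^∞ 2^{2jk} · j^{-j·j^{1/δ}} ≤ exp(c·k^{1+δ}). Here j^{-j·j^{1/δ}} = (j^{j^{1/δ}})^{-j}, and the series on the left is convergent for each fixed k. -/

import Mathlib

/-!
With `a = 2k + 1`, the `n`-th term satisfies `2^(2nk) · n^(-n·n^(1/δ)) ≤ 2^(a^(1+δ)) / 2^n`:
if `n ≤ a^δ` then `n a ≤ a^(1+δ)`, and otherwise `n ≥ 2` and `a < n^(1/δ)`, so that
`2^(n a) ≤ n^(n·n^(1/δ))`. Summing the geometric series bounds the total by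
`2^((2k+1)^(1+δ)) ≤ exp (3^(1+δ) log 2 · k^(1+δ))`.
-/

open Real

lemma two_rpow_nat_mul_le {δ a : ℝ} (hδ : 0 < δ) (ha : 1 ≤ a) {n : ℕ} (hn : 1 ≤ n) :
    (2 : ℝ) ^ ((n : ℝ) * a) ≤ 2 ^ (a ^ (1 + δ)) * (n : ℝ) ^ ((n : ℝ) * (n : ℝ) ^ (1 / δ)) := by
  have hn1 : (1 : ℝ) ≤ n := by exact_mod_cast hn
  rcases le_or_gt (n : ℝ) (a ^ δ) with hsmall | hlarge
  · have hexp : (n : ℝ) * a ≤ a ^ (1 + δ) := by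
      rw [add_comm, rpow_add_one (by positivity)]
      exact mul_le_mul_of_nonneg_right hsmall (by positivity)
    calc (2 : ℝ) ^ ((n : ℝ) * a) ≤ 2 ^ (a ^ (1 + δ)) := rpow_le_rpow_of_exponent_le one_le_two hexp
      _ ≤ _ := le_mul_of_one_le_right (by positivity) (one_le_rpow hn1 (by positivity))
  · have hn2 : (2 : ℝ) ≤ n := by
      have : (1 : ℝ) < n := (one_le_rpow ha hδ.le).trans_lt hlarge
      exact_mod_cast (show 1 < n by exact_mod_cast this)
    have ha_lt : a < (n : ℝ) ^ (1 / δ) := by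
      simpa [← rpow_mul (by positivity : (0 : ℝ) ≤ a), hδ.ne'] using
        rpow_lt_rpow (by positivity) hlarge (by positivity : 0 < 1 / δ)
    calc (2 : ℝ) ^ ((n : ℝ) * a) ≤ 2 ^ ((n : ℝ) * (n : ℝ) ^ (1 / δ)) :=
          rpow_le_rpow_of_exponent_le one_le_two (by gcongr)
      _ ≤ (n : ℝ) ^ ((n : ℝ) * (n : ℝ) ^ (1 / δ)) := rpow_le_rpow (by norm_num) hn2 (by positivity)
      _ ≤ _ := le_mul_of_one_le_left (by positivity) (one_le_rpow one_le_two (by positivity))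

lemma two_pow_mul_rpow_neg_le {δ : ℝ} (hδ : 0 < δ) (k : ℕ) {n : ℕ} (hn : 1 ≤ n) :
    (2 : ℝ) ^ (2 * n * k) * (n : ℝ) ^ (-((n : ℝ) * (n : ℝ) ^ (1 / δ)))
      ≤ 2 ^ ((2 * k + 1 : ℝ) ^ (1 + δ)) / 2 ^ n := by
  have hsplit : (2 : ℝ) ^ (2 * n * k) = 2 ^ ((n : ℝ) * (2 * k + 1)) / 2 ^ n := by
    rw [eq_div_iff (by positivity), ← rpow_natCast, ← rpow_natCast, ← rpow_add two_pos]
    congr 1; push_cast; ring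
  have hpos : 0 < (n : ℝ) ^ ((n : ℝ) * (n : ℝ) ^ (1 / δ)) := by
    have : (0 : ℝ) < n := by exact_mod_cast hn
    positivity
  rw [hsplit, rpow_neg (Nat.cast_nonneg n), div_mul_eq_mul_div, ← div_eq_mul_inv,
    div_le_div_iff_of_pos_right (by positivity), div_le_iff₀ hpos]
  exact two_rpow_nat_mul_le hδ (by linarith [(Nat.cast_nonneg k : (0 : ℝ) ≤ k)]) hn

lemma summable_and_tsum_le_of_le_div_two_pow {f : ℕ → ℝ} {M : ℝ} (hf0 : ∀ j, 0 ≤ f j)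
    (hfM : ∀ j, f j ≤ M / 2 ^ (j + 1)) : Summable f ∧ ∑' j, f j ≤ M := by
  have hg : ∀ j, M / 2 ^ (j + 1) = M / 2 / 2 ^ j := fun j => by rw [pow_succ']; ring
  simp only [hg] at hfM
  have hf := (summable_geometric_two' M).of_nonneg_of_le hf0 hfM
  exact ⟨hf, (hf.tsum_le_tsum hfM (summable_geometric_two' M)).trans_eq (tsum_geometric_two' M)⟩

lemma two_rpow_le_exp {δ : ℝ} (hδ : 0 < δ) {k : ℕ} (hk : 1 ≤ k) :
    (2 : ℝ) ^ ((2 * k + 1 : ℝ) ^ (1 + δ)) ≤ exp (3 ^ (1 + δ) * log 2 * (k : ℝ) ^ (1 + δ)) := by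
  have hk1 : (1 : ℝ) ≤ k := by exact_mod_cast hk
  rw [rpow_def_of_pos two_pos, exp_le_exp]
  calc log 2 * (2 * k + 1 : ℝ) ^ (1 + δ) ≤ log 2 * (3 * k : ℝ) ^ (1 + δ) := by gcongr; linarith
    _ = _ := by rw [mul_rpow (by norm_num) (by positivity)]; ring

/-- Lemma 4.1 of the paper: for every `δ > 0` there are `c > 0` and `K` such that for all
`k ≥ K` the series `∑_{j≥1} 2^(2jk) · j^(-j·j^(1/δ))` converges and is at most
`exp (c k^(1+δ))`. -/
theorem stmt_1 (δ : ℝ) (hδ : 0 < δ) :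
    ∃ c : ℝ, 0 < c ∧ ∃ K : ℕ, ∀ k : ℕ, K ≤ k →
      Summable (fun j : ℕ =>
        (2 : ℝ) ^ (2 * (j + 1) * k) *
          ((j + 1 : ℕ) : ℝ) ^ (-(((j + 1 : ℕ) : ℝ) * ((j + 1 : ℕ) : ℝ) ^ ((1 : ℝ) / δ)))) ∧
      (∑' j : ℕ,
        (2 : ℝ) ^ (2 * (j + 1) * k) *
          ((j + 1 : ℕ) : ℝ) ^ (-(((j + 1 : ℕ) : ℝ) * ((j + 1 : ℕ) : ℝ) ^ ((1 : ℝ) / δ))))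
        ≤ Real.exp (c * (k : ℝ) ^ ((1 : ℝ) + δ)) := by
  refine ⟨3 ^ (1 + δ) * log 2, by positivity, 1, fun k hk => ?_⟩
  refine summable_and_tsum_le_of_le_div_two_pow (fun j => by positivity) fun j => ?_
  calc _ ≤ 2 ^ ((2 * k + 1 : ℝ) ^ (1 + δ)) / 2 ^ (j + 1) :=
        two_pow_mul_rpow_neg_le hδ k (Nat.le_add_left 1 j)
    _ ≤ _ := by gcongr; exact two_rpow_le_exp hδ hk
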